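/- For every preference profile P, every edge that belongs to a River diagram under some tiebreak also belongs to the semi-River diagram: E(sRV(P)) ⊇ ⋃_{o ∈ O↓} E(M^RV(o, P)). -/

import Mathlib

attribute [local instance] Classical.propDecidable

/-- A preference profile: each of `m` voters has a strict linear (total) preference
relation over the alternatives `A`. -/
structure Profile (A : Type*) (m : ℕ) where
  pref : Fin m → A → A → Prop
  strict : ∀ i, IsStrictTotalOrder A (pref i)

/-- The majority margin of `x` over `y`: the number of voters preferring `x` to `y`
minus the number of voters preferring `y` to `x`. -/
noncomputable def margin {A : Type*} [Fintype A] {m : ℕ} (P : Profile A m) (x y : A) : ℤ :=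
  ((Finset.univ.filter fun i => P.pref i x y).card : ℤ) -
    ((Finset.univ.filter fun i => P.pref i y x).card : ℤ)

/-- The majority margin as a function on (potential) edges. -/
noncomputable def marginE {A : Type*} [Fintype A] {m : ℕ} (P : Profile A m) : A × A → ℤ :=
  fun e => margin P e.1 e.2

/-- The edge set of the margin graph: an edge `(x, y)` between distinct alternatives
whenever the majority margin of `x` over `y` is nonnegative. -/
noncomputable def marginEdges {A : Type*} [Fintype A] {m : ℕ} (P : Profile A m) :
    Finset (A × A) :=
  Finset.univ.filter fun e => e.1 ≠ e.2 ∧ 0 ≤ margin P e.1 e.2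

/-- `l` is a path from `x` to `y` in the digraph with edge set `E`:
a nonempty list of pairwise distinct vertices starting at `x`, ending at `y`,
whose consecutive vertices are joined by edges of `E`. -/
def IsPathFrom {V : Type*} (E : Finset (V × V)) (l : List V) (x y : V) : Prop :=
  l ≠ [] ∧ l.Nodup ∧ l.head? = some x ∧ l.getLast? = some y ∧
    l.Chain' fun a b => (a, b) ∈ E

/-- There is a path from `x` to `y` in the digraph with edge set `E`. -/
def Reach {V : Type*} (E : Finset (V × V)) (x y : V) : Prop :=
  ∃ l, IsPathFrom E l x y

/-- The digraph with edge set `E` contains a directed cycle. -/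
def HasCycle {V : Type*} (E : Finset (V × V)) : Prop :=
  ∃ f ∈ E, Reach E f.2 f.1

/-- `T` is a tree rooted at `r`: there is a unique path from `r` to every vertex,
no edge enters the root, and every vertex has at most one incoming edge. -/
def IsRootedTree {V : Type*} (T : Finset (V × V)) (r : V) : Prop :=
  (∀ v : V, ∃! l : List V, IsPathFrom T l r v) ∧ (∀ e ∈ T, e.2 ≠ r) ∧
    ∀ e f, e ∈ T → f ∈ T → e.2 = f.2 → e = f

/-- `a` has no incoming edge in `D`. -/
def noIncoming {V : Type*} (D : Finset (V × V)) (a : V) : Prop :=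
  ∀ e ∈ D, e.2 ≠ a

/-- `o` is a descending linear ordering of the edge set `E` with respect to the
margin function `marg`: an enumeration of `E` without repetition in which edges of
larger margin come before edges of smaller margin. -/
def IsDescOrdering {V : Type*} (marg : V × V → ℤ) (E : Finset (V × V))
    (o : List (V × V)) : Prop :=
  o.Nodup ∧ (∀ e, e ∈ o ↔ e ∈ E) ∧ o.Pairwise fun e f => marg f ≤ marg e

/-- One step of the River procedure: add `e = (x, y)` to the current diagram `D` unless
(R1) `y` already has an incoming edge in `D`, or (R2) there is a path from `y` to `x`
in `D`. -/
noncomputable def riverStep {V : Type*} (D : Finset (V × V)) (e : V × V) :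
    Finset (V × V) :=
  if (∃ f ∈ D, f.2 = e.2) ∨ Reach D e.2 e.1 then D else insert e D

/-- The River diagram obtained by processing the edges in the order `o`,
starting from the empty diagram. -/
noncomputable def riverFold {V : Type*} (o : List (V × V)) : Finset (V × V) :=
  o.foldl riverStep ∅

/-- One step of the semi-River process with margin function `marg`: add `e = (x, y)` to
the current diagram `D` unless
(sR1) there is another incoming edge `e' = (z, y)` of `y` among the included edges of
margin strictly greater than `marg e` such that there is no path from `y` to `z` among
the included edges of margin at least `marg e'`, or
(sR2) within the included edges of strictly greater margin, the set of vertices having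
a path to `x` avoiding all incoming edges of `y` induces an acyclic subgraph in which
`y` is the only vertex with no incoming edge. -/
noncomputable def semiRiverStep {V : Type*} (marg : V × V → ℤ) (D : Finset (V × V))
    (e : V × V) : Finset (V × V) :=
  let Sgt := D.filter fun f => marg e < marg f
  let sR1 : Prop := ∃ f ∈ Sgt, f.2 = e.2 ∧
      ¬ Reach (D.filter fun g => marg f ≤ marg g) e.2 f.1
  let Anc : Set V := {v | Reach (Sgt.filter fun g => g.2 ≠ e.2) v e.1}
  let ind := Sgt.filter fun g => g.1 ∈ Anc ∧ g.2 ∈ Anc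
  let sR2 : Prop := e.2 ∈ Anc ∧ ¬ HasCycle ind ∧
      ∀ v ∈ Anc, ((∀ g ∈ ind, g.2 ≠ v) ↔ v = e.2)
  if sR1 ∨ sR2 then D else insert e D

/-- The semi-River diagram obtained by processing the edges in the order `o`,
starting from the empty diagram. -/
noncomputable def semiRiverFold {V : Type*} (marg : V × V → ℤ) (o : List (V × V)) :
    Finset (V × V) :=
  o.foldl (semiRiverStep marg) ∅

/-- The runs of the directed Prim algorithm on the digraph with edge set `E`, weight
function `w`, and start vertex `s`: `PrimRun E w s S T` holds if after some number of
steps the set of explored vertices is `S` and the collected tree edges are `T`; at each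
step an arbitrary crossing edge of maximum weight is selected. -/
inductive PrimRun {V : Type*} {β : Type*} [LinearOrder β] (E : Finset (V × V))
    (w : V × V → β) (s : V) : Finset V → Finset (V × V) → Prop
  | init : PrimRun E w s {s} ∅
  | step {S : Finset V} {T : Finset (V × V)} (e : V × V) (he : e ∈ E)
      (h1 : e.1 ∈ S) (h2 : e.2 ∉ S)
      (hmax : ∀ f ∈ E, f.1 ∈ S → f.2 ∉ S → w f ≤ w e)
      (hrun : PrimRun E w s S T) :
      PrimRun E w s (insert e.2 S) (insert e T)

/-- `T` is a possible output of the directed Prim algorithm on `(E, w)` started at `s`: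
it is obtained by a run that has terminated, i.e. no crossing edge remains. -/
def IsPrimOutput {V : Type*} {β : Type*} [LinearOrder β] (E : Finset (V × V))
    (w : V × V → β) (s : V) (T : Finset (V × V)) : Prop :=
  ∃ S : Finset V, PrimRun E w s S T ∧ ∀ f ∈ E, f.1 ∈ S → f.2 ∈ S

/-- The strength of a path (as a list of vertices): the minimum weight of its edges,
`⊤` for a trivial path with no edges. -/
noncomputable def strength {V : Type*} (w : V × V → ℕ) (l : List V) : ℕ∞ :=
  ((l.zip l.tail).map fun p => (w p : ℕ∞)).foldr min ⊤

/-- `l` is a strongest path from `x` to `y`: it is a path from `x` to `y` and no path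
from `x` to `y` has (strictly) greater strength. -/
def IsStrongestPath {V : Type*} (E : Finset (V × V)) (w : V × V → ℕ) (l : List V)
    (x y : V) : Prop :=
  IsPathFrom E l x y ∧ ∀ l', IsPathFrom E l' x y → strength w l' ≤ strength w l

/-- `o` is a descending linear ordering of `E` in which, among edges of equal margin,
edges belonging to `E'` come before edges not belonging to `E'`. -/
def IsSetOrdering {V : Type*} (marg : V × V → ℤ) (E E' : Finset (V × V))
    (o : List (V × V)) : Prop :=
  o.Nodup ∧ (∀ e, e ∈ o ↔ e ∈ E) ∧
    o.Pairwise fun e f => marg f ≤ marg e ∧ (marg e = marg f → f ∈ E' → e ∈ E')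

/-!
Induct along the River order `o'`. When River accepts `e = (x, y)`, its diagram `D'` so far
has no edge into `y` and no path from `y` to `x`, and by induction the edges of `D'` of margin
larger than that of `e` already lie in the semi-River diagram `D` at the moment `e` is
processed there. Conversely every edge `g ∈ D` of larger margin is blocked, in River's sense,
by the edges of `D'` of margin at least that of `g`. This refutes (sR1) at once. Against (sR2)
it shows that every vertex of the ancestor set of `x` other than `y` has an incoming edge of
`D'` inside the induced subgraph (otherwise River's reason for rejecting the incoming edge
would close a cycle there); walking these edges backwards in the acyclic subgraph must end
at `y`, which yields a path from `y` to `x` in `D'`.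
-/

section Reach

variable {V : Type*} {E F : Finset (V × V)} {x y z : V}

theorem Reach.refl (E : Finset (V × V)) (x : V) : Reach E x x :=
  ⟨[x], List.cons_ne_nil x [], List.nodup_singleton x, rfl, rfl, List.isChain_singleton x⟩

theorem Reach.head (hxy : (x, y) ∈ E) (h : Reach E y z) : Reach E x z := by
  obtain ⟨l, hne, hnd, hh, hl, hc⟩ := h
  by_cases hx : x ∈ l
  · obtain ⟨l₁, l₂, rfl⟩ := List.append_of_mem hx
    exact ⟨x :: l₂, by simp, hnd.sublist (List.sublist_append_right _ _), rfl,
      by simpa using hl, hc.right_of_append⟩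
  · cases l with
    | nil => exact absurd rfl hne
    | cons w t =>
      obtain rfl : w = y := by simpa using hh
      exact ⟨x :: w :: t, by simp, List.nodup_cons.2 ⟨hx, hnd⟩, rfl, by simpa using hl,
        hc.cons_cons hxy⟩

theorem reach_iff_reflTransGen :
    Reach E x y ↔ Relation.ReflTransGen (fun a b => (a, b) ∈ E) x y := by
  constructor
  · rintro ⟨l, hne, -, hh, hl, hc⟩
    have := List.relationReflTransGen_of_exists_isChain l hc hne
    rwa [(List.head_eq_iff_head?_eq_some hne).2 hh,
      (List.getLast_eq_iff_getLast?_eq_some hne).2 hl] at this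
  · intro h
    induction h using Relation.ReflTransGen.head_induction_on with
    | refl => exact Reach.refl E y
    | head hxy _ ih => exact ih.head hxy

theorem Reach.trans (hxy : Reach E x y) (hyz : Reach E y z) : Reach E x z :=
  reach_iff_reflTransGen.2 <| (reach_iff_reflTransGen.1 hxy).trans (reach_iff_reflTransGen.1 hyz)

theorem Reach.mono (h : Reach E x y) (hEF : E ⊆ F) : Reach F x y :=
  reach_iff_reflTransGen.2 <|
    Relation.ReflTransGen.mono (fun _ _ hab => hEF hab) _ _ (reach_iff_reflTransGen.1 h)

end Reach

section Acyclic

variable {V : Type*} {E : Finset (V × V)}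

theorem reach_of_forall_noIncoming_eq [Finite V] (hE : ¬ HasCycle E) {r v : V}
    (hsrc : ∀ u, Reach E u v → noIncoming E u → u = r) : Reach E r v := by
  let R : V → V → Prop := fun a b => (a, b) ∈ E
  have : IsTrans V (Relation.TransGen R) := ⟨fun _ _ _ => Relation.TransGen.trans⟩
  have : Std.Irrefl (Relation.TransGen R) := ⟨fun a ha => by
    obtain ⟨b, hab, hba⟩ := Relation.TransGen.tail'_iff.1 ha
    exact hE ⟨(b, a), hba, reach_iff_reflTransGen.2 hab⟩⟩
  have hwf : WellFounded R :=
    Subrelation.wf Relation.TransGen.single (Finite.wellFounded_of_trans_of_irrefl _)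
  obtain ⟨u, hu, hmin⟩ := hwf.has_min {u | Relation.ReflTransGen R u v} ⟨v, .refl⟩
  have hu_src : noIncoming E u := fun f hf hfu => by
    have hfu' : R f.1 u := by simpa [R, ← hfu] using hf
    exact hmin f.1 (hu.head hfu') hfu'
  exact hsrc u (reach_iff_reflTransGen.2 hu) hu_src ▸ reach_iff_reflTransGen.2 hu

theorem Reach.filter_of_forall_reach {p : V → Prop} {x y : V} (h : Reach E x y)
    (hp : ∀ v, Reach E v y → p v) : Reach (E.filter fun g => p g.1 ∧ p g.2) x y := by
  simp only [reach_iff_reflTransGen] at h hp ⊢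
  induction h using Relation.ReflTransGen.head_induction_on with
  | refl => exact .refl
  | head hab hby ih =>
    exact .head (Finset.mem_filter.2 ⟨hab, hp _ (.head hab hby), hp _ hby⟩) ih

end Acyclic

theorem le_of_mem_cons_of_pairwise_append {α β : Type*} [Preorder β] {f : α → β}
    {l₁ l₂ : List α} {e x : α}
    (hl : (l₁ ++ e :: l₂).Pairwise fun a b => f b ≤ f a) (hx : x ∈ e :: l₂) :
    f x ≤ f e := by
  rcases List.mem_cons.1 hx with rfl | hx
  · exact le_rfl
  · exact (List.pairwise_cons.1 (List.pairwise_append.1 hl).2.1).1 x hx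

theorem subset_foldl_of_subset_step {α : Type*} {step : Finset α → α → Finset α}
    (hstep : ∀ D a, D ⊆ step D a) (l : List α) (D : Finset α) : D ⊆ l.foldl step D := by
  induction l generalizing D with
  | nil => exact subset_rfl
  | cons a t ih => exact (hstep D a).trans (ih _)

theorem foldl_subset_union_of_step_subset_insert {α : Type*} [DecidableEq α]
    {step : Finset α → α → Finset α} (hstep : ∀ D a, step D a ⊆ insert a D) (l : List α)
    (D : Finset α) : l.foldl step D ⊆ D ∪ l.toFinset := by
  induction l generalizing D with
  | nil => simp
  | cons a t ih =>
    calc (a :: t).foldl step D ⊆ step D a ∪ t.toFinset := ih _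
      _ ⊆ insert a D ∪ t.toFinset := Finset.union_subset_union_left (hstep D a)
      _ = D ∪ (a :: t).toFinset := by
        rw [List.toFinset_cons, Finset.insert_union, Finset.union_insert]

section River

variable {V : Type*} {D E : Finset (V × V)} {e : V × V}

def RiverBlocked (D : Finset (V × V)) (e : V × V) : Prop :=
  (∃ f ∈ D, f.2 = e.2) ∨ Reach D e.2 e.1

theorem RiverBlocked.mono (h : RiverBlocked D e) (hDE : D ⊆ E) : RiverBlocked E e :=
  h.imp (fun ⟨f, hf, hfe⟩ => ⟨f, hDE hf, hfe⟩) (·.mono hDE)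

theorem riverStep_of_riverBlocked (h : RiverBlocked D e) : riverStep D e = D :=
  if_pos h

theorem riverStep_of_not_riverBlocked (h : ¬ RiverBlocked D e) : riverStep D e = insert e D :=
  if_neg h

theorem subset_riverStep (D : Finset (V × V)) (e : V × V) : D ⊆ riverStep D e := by
  by_cases h : RiverBlocked D e
  · rw [riverStep_of_riverBlocked h]
  · rw [riverStep_of_not_riverBlocked h]; exact Finset.subset_insert e D

theorem riverStep_subset_insert (D : Finset (V × V)) (e : V × V) :
    riverStep D e ⊆ insert e D := by
  by_cases h : RiverBlocked D e
  · rw [riverStep_of_riverBlocked h]; exact Finset.subset_insert e D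
  · rw [riverStep_of_not_riverBlocked h]

theorem riverFold_append (l₁ l₂ : List (V × V)) :
    riverFold (l₁ ++ l₂) = l₂.foldl riverStep (riverFold l₁) :=
  List.foldl_append

theorem riverFold_append_singleton (l : List (V × V)) (e : V × V) :
    riverFold (l ++ [e]) = riverStep (riverFold l) e :=
  List.foldl_append

theorem riverFold_subset_append (l₁ l₂ : List (V × V)) :
    riverFold l₁ ⊆ riverFold (l₁ ++ l₂) := by
  rw [riverFold_append]
  exact subset_foldl_of_subset_step subset_riverStep l₂ _

theorem riverFold_subset_toFinset (l : List (V × V)) : riverFold l ⊆ l.toFinset := by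
  simpa [riverFold] using foldl_subset_union_of_step_subset_insert riverStep_subset_insert l ∅

/-- An accepted edge is blocked by itself, through rule (R1). -/
theorem riverBlocked_filter_riverFold {β : Type*} [Preorder β] [DecidableLE β]
    {marg : V × V → β} {l : List (V × V)} (hl : l.Pairwise fun e f => marg f ≤ marg e)
    {g : V × V} (hg : g ∈ l) :
    RiverBlocked ((riverFold l).filter fun f => marg g ≤ marg f) g := by
  obtain ⟨l₁, l₂, rfl⟩ := List.append_of_mem hg
  by_cases hb : RiverBlocked (riverFold l₁) g
  · refine hb.mono fun f hf => Finset.mem_filter.2 ⟨riverFold_subset_append _ _ hf, ?_⟩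
    exact (List.pairwise_append.1 hl).2.2 f
      (List.mem_toFinset.1 (riverFold_subset_toFinset _ hf)) g List.mem_cons_self
  · have hgR : g ∈ riverFold (l₁ ++ g :: l₂) := by
      rw [riverFold_append]
      refine subset_foldl_of_subset_step subset_riverStep l₂ _ ?_
      rw [riverStep_of_not_riverBlocked hb]
      exact Finset.mem_insert_self g _
    exact Or.inl ⟨g, Finset.mem_filter.2 ⟨hgR, le_rfl⟩, rfl⟩

end River

section SemiRiver

variable {V : Type*} {marg : V × V → ℤ} {D : Finset (V × V)} {e : V × V}

def SemiRiverR1 (marg : V × V → ℤ) (D : Finset (V × V)) (e : V × V) : Prop :=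
  ∃ f ∈ D.filter (fun f => marg e < marg f), f.2 = e.2 ∧
    ¬ Reach (D.filter fun g => marg f ≤ marg g) e.2 f.1

def SemiRiverR2 (marg : V × V → ℤ) (D : Finset (V × V)) (e : V × V) : Prop :=
  let Sgt := D.filter fun f => marg e < marg f
  let Anc : Set V := {v | Reach (Sgt.filter fun g => g.2 ≠ e.2) v e.1}
  let ind := Sgt.filter fun g => g.1 ∈ Anc ∧ g.2 ∈ Anc
  e.2 ∈ Anc ∧ ¬ HasCycle ind ∧ ∀ v ∈ Anc, (noIncoming ind v ↔ v = e.2)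

theorem semiRiverStep_eq_insert (h1 : ¬ SemiRiverR1 marg D e) (h2 : ¬ SemiRiverR2 marg D e) :
    semiRiverStep marg D e = insert e D :=
  if_neg (not_or.2 ⟨h1, h2⟩)

theorem subset_semiRiverStep (marg : V × V → ℤ) (D : Finset (V × V)) (e : V × V) :
    D ⊆ semiRiverStep marg D e := by
  simp only [semiRiverStep]; split_ifs
  · exact subset_rfl
  · exact Finset.subset_insert e D

theorem semiRiverStep_subset_insert (marg : V × V → ℤ) (D : Finset (V × V)) (e : V × V) :
    semiRiverStep marg D e ⊆ insert e D := by
  simp only [semiRiverStep]; split_ifs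
  · exact Finset.subset_insert e D
  · exact subset_rfl

end SemiRiver

section SemiRiverAccepts

open Finset

variable {V : Type*} {marg : V × V → ℤ} {D D' : Finset (V × V)} {e : V × V}

theorem not_semiRiverR1 (hR : ¬ RiverBlocked D' e)
    (hsub : ∀ h ∈ D', marg e < marg h → h ∈ D)
    (hblocked : ∀ g ∈ D, marg e < marg g →
      RiverBlocked (D'.filter fun f => marg g ≤ marg f) g) :
    ¬ SemiRiverR1 marg D e := by
  rintro ⟨f, hf, hfe, hnreach⟩
  obtain ⟨hfD, hef⟩ := mem_filter.1 hf
  rcases hblocked f hfD hef with ⟨h, hh, hhf⟩ | hreach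
  · exact hR (Or.inl ⟨h, (mem_filter.1 hh).1, hhf.trans hfe⟩)
  · refine hnreach (hfe ▸ hreach.mono fun h hh => ?_)
    obtain ⟨hhD', hfh⟩ := mem_filter.1 hh
    exact mem_filter.2 ⟨hsub h hhD' (hef.trans_le hfh), hfh⟩

theorem not_semiRiverR2 [Finite V] (hR : ¬ RiverBlocked D' e)
    (hsub : ∀ h ∈ D', marg e < marg h → h ∈ D)
    (hblocked : ∀ g ∈ D, marg e < marg g →
      RiverBlocked (D'.filter fun f => marg g ≤ marg f) g) :
    ¬ SemiRiverR2 marg D e := by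
  rintro ⟨-, hacyc, hsrc⟩
  set Sgt := D.filter fun f => marg e < marg f
  set G := Sgt.filter fun g => g.2 ≠ e.2
  set Anc : Set V := {v | Reach G v e.1}
  set ind := Sgt.filter fun g => g.1 ∈ Anc ∧ g.2 ∈ Anc
  simp only [RiverBlocked, not_or, not_exists, not_and] at hR
  obtain ⟨hR1, hR2⟩ := hR
  have hG : ∀ h ∈ D', marg e < marg h → h ∈ G := fun h hh hlt =>
    mem_filter.2 ⟨mem_filter.2 ⟨hsub h hh hlt, hlt⟩, hR1 h hh⟩
  have hin : ∀ v ∈ Anc, v ≠ e.2 → ∃ h ∈ ind, h ∈ D' ∧ h.2 = v := by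
    intro v hv hve
    obtain ⟨g, hg, hgv⟩ : ∃ g ∈ ind, g.2 = v := by
      by_contra! hno
      exact hve ((hsrc v hv).1 hno)
    obtain ⟨hgS, hg1, -⟩ := mem_filter.1 hg
    obtain ⟨hgD, hge⟩ := mem_filter.1 hgS
    have hDgG : (D'.filter fun f => marg g ≤ marg f) ⊆ G := fun h hh =>
      hG h (mem_filter.1 hh).1 (hge.trans_le (mem_filter.1 hh).2)
    rcases hblocked g hgD hge with ⟨h, hh, hhg⟩ | hreach
    · have hhG := hDgG hh
      have hhv : h.2 = v := hhg.trans hgv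
      have hh1 : h.1 ∈ Anc := Reach.head (y := v) (hhv ▸ hhG) hv
      exact ⟨h, mem_filter.2 ⟨(mem_filter.1 hhG).1, hh1, hhv ▸ hv⟩,
        (mem_filter.1 hh).1, hhv⟩
    · -- then `g` closes a cycle inside `ind`
      refine absurd ⟨g, hg, ?_⟩ hacyc
      have := (hreach.mono hDgG).filter_of_forall_reach (p := (· ∈ Anc))
        fun u hu => hu.trans hg1
      exact this.mono (filter_subset_filter _ (filter_subset _ _))
  have hF : ¬ HasCycle (ind ∩ D') := fun ⟨f, hf, hc⟩ =>
    hacyc ⟨f, (mem_inter.1 hf).1, hc.mono inter_subset_left⟩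
  refine hR2 ((reach_of_forall_noIncoming_eq hF fun u hu hu_src => ?_).mono inter_subset_right)
  by_contra hne
  have huAnc : u ∈ Anc := hu.mono fun h hh =>
    mem_filter.2 ⟨(mem_filter.1 (mem_inter.1 hh).1).1, hR1 h (mem_inter.1 hh).2⟩
  obtain ⟨h, hind, hD', rfl⟩ := hin u huAnc hne
  exact hu_src h (mem_inter.2 ⟨hind, hD'⟩) rfl

theorem self_mem_semiRiverStep [Finite V] (hR : ¬ RiverBlocked D' e)
    (hsub : ∀ h ∈ D', marg e < marg h → h ∈ D)
    (hblocked : ∀ g ∈ D, marg e < marg g →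
      RiverBlocked (D'.filter fun f => marg g ≤ marg f) g) :
    e ∈ semiRiverStep marg D e := by
  rw [semiRiverStep_eq_insert (not_semiRiverR1 hR hsub hblocked)
    (not_semiRiverR2 hR hsub hblocked)]
  exact mem_insert_self e D

end SemiRiverAccepts

section RiverSubsetSemiRiver

variable {V : Type*} {marg : V × V → ℤ}

theorem semiRiverFold_append_cons (marg : V × V → ℤ) (l₁ : List (V × V)) (e : V × V)
    (l₂ : List (V × V)) :
    semiRiverFold marg (l₁ ++ e :: l₂) =
      l₂.foldl (semiRiverStep marg) (semiRiverStep marg (semiRiverFold marg l₁) e) :=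
  List.foldl_append

theorem mem_semiRiverFold_of_not_riverBlocked [Finite V] {o b a : List (V × V)} {e : V × V}
    (ho : o.Pairwise fun e f => marg f ≤ marg e)
    (hba : (b ++ e :: a).Pairwise fun e f => marg f ≤ marg e)
    (hmem : ∀ f, f ∈ b ++ e :: a ↔ f ∈ o)
    (hR : ¬ RiverBlocked (riverFold b) e) (hsub : riverFold b ⊆ semiRiverFold marg o) :
    e ∈ semiRiverFold marg o := by
  obtain ⟨c₁, c₂, rfl⟩ := List.append_of_mem ((hmem e).1 (by simp))
  rw [semiRiverFold_append_cons] at hsub ⊢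
  refine subset_foldl_of_subset_step (subset_semiRiverStep marg) c₂ _
    (self_mem_semiRiverStep hR (fun h hh hlt => ?_) (fun g hg hlt => ?_))
  · have := foldl_subset_union_of_step_subset_insert (semiRiverStep_subset_insert marg) c₂ _
      (hsub hh)
    rw [Finset.mem_union, List.mem_toFinset] at this
    rcases this with hh | hh
    · rcases Finset.mem_insert.1 (semiRiverStep_subset_insert marg _ e hh) with rfl | hh
      · exact absurd hlt (lt_irrefl _)
      · exact hh
    · exact absurd (le_of_mem_cons_of_pairwise_append ho (List.mem_cons_of_mem e hh)) hlt.not_ge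
  · have hgo : g ∈ c₁ := by
      simpa [semiRiverFold] using
        foldl_subset_union_of_step_subset_insert (semiRiverStep_subset_insert marg) c₁ ∅ hg
    rcases List.mem_append.1 ((hmem g).2 (List.mem_append_left _ hgo)) with hgb | hgea
    · exact riverBlocked_filter_riverFold (hba.sublist (List.sublist_append_left _ _)) hgb
    · exact absurd (le_of_mem_cons_of_pairwise_append hba hgea) hlt.not_ge

theorem riverFold_subset_semiRiverFold [Finite V] {o o' : List (V × V)}
    (ho : o.Pairwise fun e f => marg f ≤ marg e) (ho' : o'.Pairwise fun e f => marg f ≤ marg e)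
    (hmem : ∀ e, e ∈ o' ↔ e ∈ o) : riverFold o' ⊆ semiRiverFold marg o := by
  suffices ∀ l, l <+: o' → riverFold l ⊆ semiRiverFold marg o from
    this o' (List.prefix_refl o')
  intro l hl
  induction l using List.reverseRecOn with
  | nil => exact Finset.empty_subset _
  | append_singleton b e ih =>
    obtain ⟨a, rfl⟩ := hl
    have ih := ih ((List.prefix_append b _).trans (List.prefix_append _ a))
    rw [riverFold_append_singleton]
    by_cases hR : RiverBlocked (riverFold b) e
    · rwa [riverStep_of_riverBlocked hR]
    rw [riverStep_of_not_riverBlocked hR]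
    simp only [List.append_assoc, List.singleton_append] at ho' hmem
    exact Finset.insert_subset (mem_semiRiverFold_of_not_riverBlocked ho ho' hmem hR ih) ih

end RiverSubsetSemiRiver

theorem semi_river_diagram_superset_of_all_river_diagrams_general
    {A : Type*} [Fintype A] {m : ℕ}
    (P : Profile A m) (o : List (A × A))
    (ho : IsDescOrdering (marginE P) (marginEdges P) o)
    (o' : List (A × A)) (ho' : IsDescOrdering (marginE P) (marginEdges P) o') :
    riverFold o' ⊆ semiRiverFold (marginE P) o :=
  riverFold_subset_semiRiverFold ho.2.2 ho'.2.2 fun e => (ho'.2.1 e).trans (ho.2.1 e).symm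

/-- For every preference profile `P`, every edge that belongs to a
River diagram under some tiebreak also belongs to the semi-River diagram
(computed with any descending linear ordering `o`):
`E(sRV(P)) ⊇ ⋃_{o' ∈ O↓} E(M^RV(o', P))`. -/
theorem semi_river_diagram_superset_of_all_river_diagrams
    {A : Type*} [Fintype A] {m : ℕ} (hm : 1 ≤ m) (hA : 2 ≤ Fintype.card A)
    (P : Profile A m) (o : List (A × A))
    (ho : IsDescOrdering (marginE P) (marginEdges P) o)
    (o' : List (A × A)) (ho' : IsDescOrdering (marginE P) (marginEdges P) o') :
    riverFold o' ⊆ semiRiverFold (marginE P) o :=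
  semi_river_diagram_superset_of_all_river_diagrams_general P o ho o' ho'
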